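/- Let {(Z_λ, ρ_λ)}_{λ∈Λ} be an equicontinuous family of antipodal spaces and fix R > 0. For every ε > 0 there exists δ > 0 (depending only on R and ε) such that for every λ ∈ Λ, every antipodal function ρ on Z_λ that is Moebius equivalent to ρ_λ with ‖τ_ρ‖_∞ ≤ R (where τ_ρ = log(dρ/dρ_λ)), and all ξ, η ∈ Z_λ with ρ_λ(ξ,η) < δ, one has |τ_ρ(ξ) − τ_ρ(η)| < ε. -/

import Mathlib

open Filter Topology Metric
open scoped ENNReal

universe u v

/-- A semi-metric (separating function) on a compact metrizable space: continuous, symmetric,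
nonnegative, and vanishing exactly on the diagonal. -/
def IsSemiMetric {Z : Type*} [TopologicalSpace Z] (ρ : Z → Z → ℝ) : Prop :=
  Continuous (Function.uncurry ρ) ∧ (∀ ξ η, ρ ξ η = ρ η ξ) ∧
    (∀ ξ η, 0 ≤ ρ ξ η) ∧ ∀ ξ η, ρ ξ η = 0 ↔ ξ = η

/-- An antipodal function: a semi-metric of diameter at most one such that every point has an
antipode at distance one. -/
def IsAntipodalFn {Z : Type*} [TopologicalSpace Z] (ρ : Z → Z → ℝ) : Prop :=
  IsSemiMetric ρ ∧ (∀ ξ η, ρ ξ η ≤ 1) ∧ ∀ ξ, ∃ η, ρ ξ η = 1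

/-- An equicontinuous family of semi-metric spaces. -/
def EquicontinuousFamily {ι : Type*} {Z : ι → Type*} (ρ : ∀ i, Z i → Z i → ℝ) : Prop :=
  ∀ ε : ℝ, 0 < ε → ∃ δ : ℝ, 0 < δ ∧ ∀ (i : ι) (ξ η : Z i), ρ i ξ η < δ →
    ∀ ζ : Z i, |ρ i ξ ζ - ρ i η ζ| < ε

/-!
Fix `ξ` and let `ζ` be a `β`-antipode of `ξ`. From `β ξ ζ = 1`, `β η ζ ≤ 1` and the Moebius
relation, `e^{τ η} ρ(η, ζ)² ≤ e^{τ ξ} ρ(ξ, ζ)²`, and `|τ| ≤ R` forces `ρ(ξ, ζ) ≥ e^{-R}`.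
So once equicontinuity makes `ρ(η, ζ)` close to `ρ(ξ, ζ)` up to an error that is small compared
with `e^{-R}`, the ratio `ρ(ξ, ζ) / ρ(η, ζ)` is below `e^{ε/2}`, hence `τ η - τ ξ < ε`.
-/

open Real

lemma exp_neg_le_of_exp_mul_exp_mul_sq_eq_one {R s t a : ℝ} (ha : 0 ≤ a)
    (h : exp s * exp t * a ^ 2 = 1) (hs : |s| ≤ R) (ht : |t| ≤ R) : exp (-R) ≤ a := by
  have hsq : exp (-R) ^ 2 ≤ a ^ 2 :=
    calc exp (-R) ^ 2 = exp (-R) * exp (-R) * (exp s * exp t * a ^ 2) := by rw [h]; ring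
      _ ≤ exp (-s) * exp (-t) * (exp s * exp t * a ^ 2) := by
          gcongr <;> linarith [neg_abs_le s, neg_abs_le t, le_abs_self s, le_abs_self t]
      _ = a ^ 2 := by simp only [exp_neg]; field_simp
  exact (pow_le_pow_iff_left₀ (exp_pos _).le ha two_ne_zero).1 hsq

lemma lt_add_of_exp_mul_sq_le {s t a b ε : ℝ} (ha : 0 ≤ a) (hab : a * exp (-(ε / 2)) < b)
    (h : exp s * b ^ 2 ≤ exp t * a ^ 2) : s < t + ε := by
  have hb : 0 < b := lt_of_le_of_lt (by positivity) hab
  have ha' : a < exp (ε / 2) * b := by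
    rwa [exp_neg, ← div_eq_mul_inv, div_lt_iff₀ (exp_pos _), mul_comm] at hab
  have hsq : a ^ 2 < exp ε * b ^ 2 := by
    calc a ^ 2 < (exp (ε / 2) * b) ^ 2 := by gcongr
      _ = exp ε * b ^ 2 := by rw [mul_pow, ← exp_nat_mul]; ring_nf
  have : exp s * b ^ 2 < exp (t + ε) * b ^ 2 :=
    calc exp s * b ^ 2 ≤ exp t * a ^ 2 := h
      _ < exp t * (exp ε * b ^ 2) := by gcongr
      _ = exp (t + ε) * b ^ 2 := by rw [exp_add]; ring
  exact exp_lt_exp.1 (lt_of_mul_lt_mul_right this (by positivity))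

section Moebius

variable {Z : Type*} [TopologicalSpace Z] {ρ β : Z → Z → ℝ} {τ : Z → ℝ}

lemma exp_mul_sq_le_of_antipode (hβ : IsAntipodalFn β)
    (hM : ∀ ξ η, β ξ η ^ 2 = exp (τ ξ) * exp (τ η) * ρ ξ η ^ 2) {ξ ζ : Z} (hξζ : β ξ ζ = 1)
    (η : Z) : exp (τ η) * ρ η ζ ^ 2 ≤ exp (τ ξ) * ρ ξ ζ ^ 2 := by
  have hβη : β η ζ ^ 2 ≤ β ξ ζ ^ 2 := by
    rw [hξζ, one_pow]; exact pow_le_one₀ (hβ.1.2.2.1 η ζ) (hβ.2.1 η ζ)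
  rw [hM, hM] at hβη
  refine le_of_mul_le_mul_right ?_ (exp_pos (τ ζ))
  linarith

lemma sub_lt_of_forall_abs_sub_lt (hρ : ∀ ξ η, 0 ≤ ρ ξ η) (hβ : IsAntipodalFn β)
    (hM : ∀ ξ η, β ξ η ^ 2 = exp (τ ξ) * exp (τ η) * ρ ξ η ^ 2) {R ε : ℝ} (hε : 0 ≤ ε)
    (hτ : ∀ ξ, |τ ξ| ≤ R) {ξ η : Z}
    (hclose : ∀ ζ, |ρ ξ ζ - ρ η ζ| < exp (-R) * (1 - exp (-(ε / 2)))) :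
    τ η - τ ξ < ε := by
  obtain ⟨ζ, hξζ⟩ := hβ.2.2 ξ
  have hfar : exp (-R) ≤ ρ ξ ζ :=
    exp_neg_le_of_exp_mul_exp_mul_sq_eq_one (hρ ξ ζ) (by rw [← hM, hξζ, one_pow])
      (hτ ξ) (hτ ζ)
  have hexp : exp (-(ε / 2)) ≤ 1 := exp_le_one_iff.2 (by linarith)
  have hab : ρ ξ ζ * exp (-(ε / 2)) < ρ η ζ := by
    have := (abs_lt.1 (hclose ζ)).2
    nlinarith
  linarith [lt_add_of_exp_mul_sq_le (hρ ξ ζ) hab (exp_mul_sq_le_of_antipode hβ hM hξζ η)]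

end Moebius

theorem equicontinuity_of_log_derivatives
    {Λ : Type v} {Z : Λ → Type u} [∀ l, TopologicalSpace (Z l)]
    (ρ : ∀ l, Z l → Z l → ℝ) (hρ : ∀ l, IsAntipodalFn (ρ l))
    (hEq : EquicontinuousFamily ρ)
    (R : ℝ) :
    ∀ ε : ℝ, 0 < ε → ∃ δ : ℝ, 0 < δ ∧
      ∀ (l : Λ) (β : Z l → Z l → ℝ), IsAntipodalFn β →
        ∀ τ : Z l → ℝ, Continuous τ →
          (∀ ξ η : Z l, β ξ η ^ 2 = Real.exp (τ ξ) * Real.exp (τ η) * ρ l ξ η ^ 2) →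
          (∀ ξ : Z l, |τ ξ| ≤ R) →
          ∀ ξ η : Z l, ρ l ξ η < δ → |τ ξ - τ η| < ε := by
  intro ε hε
  have hε' : 0 < exp (-R) * (1 - exp (-(ε / 2))) :=
    mul_pos (exp_pos _) (sub_pos.2 (exp_lt_one_iff.2 (by linarith)))
  obtain ⟨δ, hδ, hclose⟩ := hEq _ hε'
  refine ⟨δ, hδ, fun l β hβ τ _ hM hτ ξ η hξη => abs_sub_lt_iff.2 ⟨?_, ?_⟩⟩
  · exact sub_lt_of_forall_abs_sub_lt (hρ l).1.2.2.1 hβ hM hε.le hτ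
      (hclose l η ξ (by rwa [(hρ l).1.2.1]))
  · exact sub_lt_of_forall_abs_sub_lt (hρ l).1.2.2.1 hβ hM hε.le hτ (hclose l ξ η hξη)
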